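/- With the notation of the context, the degree-0 component of η(ν′(Ω′_W)) equals (ν′(Ω′_W))₀ = (1/2)·B(ρ_k,ρ_k) − (1/8)·Σ_{α,β>0} k_α k_β·B(α,β)³/(B(α,α)B(β,β)), where ρ_k = (1/2)Σ_{α>0} k_α α ∈ V* and the sum is over all ordered pairs of positive roots. -/

import Mathlib

/-!
Write `τ x = (x)₀`. As `Q` sends a monomial of degree `m ≥ 1` to the symmetrized product of its
letters, `τ` kills every symmetrized word of positive length, and `τ 1 = 1`. Moving the
`V*`-letters to the right through `eᵢ* eⱼ = eⱼ eᵢ* + δᵢⱼ` (Wick's theorem in degrees 2 and 4) gives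
`τ(x φ) = -φ(x)/2` and `τ(x y φ ψ) = (φ(x)ψ(y) + ψ(x)φ(y))/4` for `x, y ∈ V`, `φ, ψ ∈ V*`.
The commutator `[s_α,s_β]` is the rank-two map `B(α∨,β∨)(α ⊗ B(β,·) − β ⊗ B(α,·))`, hence
`τ(ν′([s_α,s_β])²) = B(α∨,β∨)² (B(α,α)B(β,β) − B(α,β)²)/2`. After the factor `B(α∨,β∨)⁻¹` each
pair contributes `k_α k_β (2B(α,β) − 2B(α,β)³/(B(α,α)B(β,β)))/16`, and the first terms add up
to `B(ρ_k,ρ_k)/2`.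
-/

noncomputable section

open scoped Classical

/-- The defining relation of the Weyl algebra of a symplectic form `ω`. -/
def weylRel (R : Type*) [CommRing R] (U : Type*) [AddCommGroup U] [Module R U]
    (ω : U →ₗ[R] U →ₗ[R] R) : TensorAlgebra R U → TensorAlgebra R U → Prop :=
  fun a b => ∃ u w : U,
    a = TensorAlgebra.ι R u * TensorAlgebra.ι R w ∧
    b = TensorAlgebra.ι R w * TensorAlgebra.ι R u + algebraMap R _ (ω u w)

/-- The Weyl algebra of `(U, ω)`. -/
abbrev WeylAlg (R : Type*) [CommRing R] (U : Type*) [AddCommGroup U] [Module R U]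
    (ω : U →ₗ[R] U →ₗ[R] R) := RingQuot (weylRel R U ω)

/-- The canonical linear map `U → 𝒲(U,ω)`. -/
def weylι (R : Type*) [CommRing R] (U : Type*) [AddCommGroup U] [Module R U]
    (ω : U →ₗ[R] U →ₗ[R] R) : U →ₗ[R] WeylAlg R U ω :=
  (RingQuot.mkAlgHom R (weylRel R U ω)).toLinearMap ∘ₗ TensorAlgebra.ι R

/-- The canonical symplectic form on `V ⊕ V*`: `ω(V,V) = ω(V*,V*) = 0`, `ω(α,v) = α(v)`. -/
def sympForm (R : Type*) [CommRing R] (V : Type*) [AddCommGroup V] [Module R V] :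
    (V × Module.Dual R V) →ₗ[R] (V × Module.Dual R V) →ₗ[R] R :=
  LinearMap.mk₂ R (fun u w => u.2 w.1 - w.2 u.1)
    (by intro m₁ m₂ n; simp; ring)
    (by intro c m n; simp; ring)
    (by intro m n₁ n₂; simp; ring)
    (by intro c m n; simp; ring)

/-- The image of a vector `v ∈ V` in the Weyl algebra `𝒲(V ⊕ V*, ω)`. -/
def wVec (R : Type*) [CommRing R] (V : Type*) [AddCommGroup V] [Module R V] (v : V) :
    WeylAlg R (V × Module.Dual R V) (sympForm R V) :=
  weylι R (V × Module.Dual R V) (sympForm R V) (v, 0)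

/-- The image of a functional `φ ∈ V*` in the Weyl algebra `𝒲(V ⊕ V*, ω)`. -/
def wDual (R : Type*) [CommRing R] (V : Type*) [AddCommGroup V] [Module R V]
    (φ : Module.Dual R V) : WeylAlg R (V × Module.Dual R V) (sympForm R V) :=
  weylι R (V × Module.Dual R V) (sympForm R V) (0, φ)

section RootSystem

variable (n : ℕ)

/-- Real `n`-space `V₀`, containing the root system. -/
abbrev RV := Fin n → ℝ

/-- Its complexification `V = ℂⁿ`. -/
abbrev CV := Fin n → ℂ

/-- The standard inner product on `ℝⁿ` (the `W`-invariant form `B`). -/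
def dotR (x y : RV n) : ℝ := ∑ i, x i * y i

/-- The bilinear extension of `B` to `ℂⁿ`. -/
def dotC (x y : CV n) : ℂ := ∑ i, x i * y i

/-- The inclusion `ℝⁿ → ℂⁿ`. -/
def cVec (x : RV n) : CV n := fun i => (x i : ℂ)

/-- The functional `B(x, ·) ∈ V*` attached to `x ∈ ℂⁿ`. -/
def cForm (x : CV n) : Module.Dual ℂ (CV n) := ∑ i, x i • LinearMap.proj i

/-- The real reflection `s_α(v) = v − (2 B(α,v)/B(α,α)) α` on `ℝⁿ`. -/
def reflR (α : RV n) : RV n → RV n := fun v => v - (2 * dotR n α v / dotR n α α) • α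

/-- The complexified reflection `s_α` as a linear endomorphism of `ℂⁿ`. -/
def reflC (α : RV n) : CV n →ₗ[ℂ] CV n :=
  LinearMap.id - (2 / (dotR n α α : ℂ)) • (cForm n (cVec n α)).smulRight (cVec n α)

lemma cForm_cVec_self (α : RV n) : cForm n (cVec n α) (cVec n α) = (dotR n α α : ℂ) := by
  simp [cForm, cVec, dotR]

lemma reflC_invol (α : RV n) (h : dotR n α α ≠ 0) : ∀ v, reflC n α (reflC n α v) = v := by
  intro v
  have hd : (dotR n α α : ℂ) ≠ 0 := by exact_mod_cast h
  simp only [reflC, LinearMap.sub_apply, LinearMap.id_apply, LinearMap.smul_apply,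
    LinearMap.smulRight_apply, map_sub, map_smul, cForm_cVec_self, smul_eq_mul]
  match_scalars
  · ring
  · field_simp
    ring

/-- The complexified reflection `s_α` as a linear automorphism of `ℂⁿ` (for vectors `α`
with `B(α,α) = 0` — never the case for roots — we use the identity instead). -/
def reflE (α : RV n) : CV n ≃ₗ[ℂ] CV n :=
  if h : dotR n α α = 0 then LinearEquiv.refl ℂ (CV n)
  else
    { toLinearMap := reflC n α
      invFun := reflC n α
      left_inv := reflC_invol n α h
      right_inv := reflC_invol n α h }

/-- The commutator `[s_α,s_β] = s_α s_β − s_β s_α`, an element of `so(V,B) ⊂ End(ℂⁿ)`. -/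
def commC (α β : RV n) : Module.End ℂ (CV n) :=
  (reflE n α).toLinearMap ∘ₗ (reflE n β).toLinearMap
    - (reflE n β).toLinearMap ∘ₗ (reflE n α).toLinearMap

/-- The Weyl algebra `𝒲(V ⊕ V*, ω)` for `V = ℂⁿ`. -/
abbrev WC := WeylAlg ℂ (CV n × Module.Dual ℂ (CV n)) (sympForm ℂ (CV n))

/-- The Lie algebra homomorphism `ν′ : so(V,B) → 𝒲(V⊕V*,ω)`, `ν′(f) = Σ_i f(v_i) v_i*`
(written here on all endomorphisms, using the standard basis and its dual basis). -/
def nuP (f : Module.End ℂ (CV n)) : WC n :=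
  ∑ i, wVec ℂ (CV n) (f (Pi.single i 1)) * wDual ℂ (CV n) (LinearMap.proj i)

/-- `B(α∨, β∨) = 4 B(α,β)/(B(α,α) B(β,β))`, the pairing of the coroots. -/
def Bvee (α β : RV n) : ℝ := 4 * dotR n α β / (dotR n α α * dotR n β β)

/-- `ν′(Ω′_W) = (1/16) Σ_{α,β>0, B(α,β)≠0} k_α k_β B(α∨,β∨)⁻¹ ν′([s_α,s_β])²`. -/
def nuOmegaPrime (Φp : Finset (RV n)) (kf : RV n → ℂ) : WC n :=
  (1 / 16 : ℂ) • ∑ α ∈ Φp, ∑ β ∈ Φp,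
    if dotR n α β ≠ 0 then
      (kf α * kf β * ((Bvee n α β : ℝ) : ℂ)⁻¹) • (nuP n (commC n α β)) ^ 2
    else 0


open Equiv

theorem weylι_mul_weylι (R : Type*) [CommRing R] (U : Type*) [AddCommGroup U] [Module R U]
    (ω : U →ₗ[R] U →ₗ[R] R) (u w : U) :
    weylι R U ω u * weylι R U ω w
      = weylι R U ω w * weylι R U ω u + algebraMap R (WeylAlg R U ω) (ω u w) := by
  have hrel : weylRel R U ω (TensorAlgebra.ι R u * TensorAlgebra.ι R w)
      (TensorAlgebra.ι R w * TensorAlgebra.ι R u + algebraMap R _ (ω u w)) := ⟨u, w, rfl, rfl⟩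
  simpa [weylι] using RingQuot.mkAlgHom_rel R hrel

section WeylVecDual

variable (R : Type*) [CommRing R] (V : Type*) [AddCommGroup V] [Module R V]

def wVecₗ : V →ₗ[R] WeylAlg R (V × Module.Dual R V) (sympForm R V) :=
  weylι R _ (sympForm R V) ∘ₗ LinearMap.inl R V (Module.Dual R V)

def wDualₗ : Module.Dual R V →ₗ[R] WeylAlg R (V × Module.Dual R V) (sympForm R V) :=
  weylι R _ (sympForm R V) ∘ₗ LinearMap.inr R V (Module.Dual R V)

@[simp] theorem wVecₗ_apply (v : V) : wVecₗ R V v = wVec R V v := rfl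

@[simp] theorem wDualₗ_apply (φ : Module.Dual R V) : wDualₗ R V φ = wDual R V φ := rfl

theorem sympForm_apply (u w : V × Module.Dual R V) : sympForm R V u w = u.2 w.1 - w.2 u.1 := rfl

theorem wDual_mul_wVec (φ : Module.Dual R V) (v : V) :
    wDual R V φ * wVec R V v = wVec R V v * wDual R V φ + φ v • 1 := by
  simpa [wVec, wDual, sympForm_apply, Algebra.algebraMap_eq_smul_one] using
    weylι_mul_weylι R _ (sympForm R V) (0, φ) (v, 0)

theorem wVec_mul_wVec_comm (v w : V) : wVec R V v * wVec R V w = wVec R V w * wVec R V v := by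
  simpa [wVec, sympForm_apply] using weylι_mul_weylι R _ (sympForm R V) (v, 0) (w, 0)

theorem wDual_mul_wDual_comm (φ ψ : Module.Dual R V) :
    wDual R V φ * wDual R V ψ = wDual R V ψ * wDual R V φ := by
  simpa [wDual, sympForm_apply] using weylι_mul_weylι R _ (sympForm R V) (0, φ) (0, ψ)

theorem wVec_mul_wDual_mul_wVec_mul_wDual (v w : V) (φ ψ : Module.Dual R V) :
    (wVec R V v * wDual R V φ) * (wVec R V w * wDual R V ψ)
      = wVec R V v * (wVec R V w * (wDual R V φ * wDual R V ψ))
        + φ w • (wVec R V v * wDual R V ψ) := by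
  rw [mul_assoc, ← mul_assoc (wDual R V φ), wDual_mul_wVec, add_mul, smul_mul_assoc, one_mul,
    mul_add, mul_smul_comm, mul_assoc]

end WeylVecDual

def permSum {A : Type*} [Semiring A] {m : ℕ} (y : Fin m → A) : A :=
  ∑ σ : Perm (Fin m), (List.ofFn (y ∘ σ)).prod

@[simp] theorem permSum_zero {A : Type*} [Semiring A] (y : Fin 0 → A) : permSum y = 1 := by
  simp [permSum]

theorem permSum_succ {A : Type*} [Semiring A] {m : ℕ} (y : Fin (m + 1) → A) :
    permSum y = ∑ p, y p * permSum (y ∘ swap 0 p ∘ Fin.succ) := by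
  rw [permSum, ← Equiv.sum_comp Perm.decomposeFin.symm, Fintype.sum_prod_type]
  refine Finset.sum_congr rfl fun p _ => ?_
  rw [permSum, Finset.mul_sum]
  refine Finset.sum_congr rfl fun τ _ => ?_
  simp [List.ofFn_succ, Perm.decomposeFin_symm_apply_zero, Perm.decomposeFin_symm_apply_succ,
    Function.comp_def]

section

variable {n}

theorem cForm_apply (x v : CV n) : cForm n x v = dotC n x v := by
  simp [cForm, dotC]

theorem dotC_comm (x y : CV n) : dotC n x y = dotC n y x := dotProduct_comm x y

theorem dotR_comm (x y : RV n) : dotR n x y = dotR n y x := dotProduct_comm x y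

theorem dotC_cVec (α β : RV n) : dotC n (cVec n α) (cVec n β) = (dotR n α β : ℂ) := by
  simp [dotC, dotR, cVec]

theorem dotR_self_ne_zero_of_dotR_ne_zero {α β : RV n} (h : dotR n α β ≠ 0) :
    dotR n α α ≠ 0 := by
  intro hα
  rw [show α = 0 from dotProduct_self_eq_zero.mp hα] at h
  exact h (zero_dotProduct β)

theorem dotC_sum_smul_cVec (s : Finset (RV n)) (w : RV n → ℂ) :
    dotC n (∑ α ∈ s, w α • cVec n α) (∑ β ∈ s, w β • cVec n β)
      = ∑ α ∈ s, ∑ β ∈ s, w α * w β * dotR n α β := by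
  change (∑ α ∈ s, w α • cVec n α) ⬝ᵥ (∑ β ∈ s, w β • cVec n β) = _
  simp only [sum_dotProduct, dotProduct_sum, smul_dotProduct, dotProduct_smul, smul_eq_mul,
    Finset.mul_sum]
  refine Finset.sum_congr rfl fun α _ => Finset.sum_congr rfl fun β _ => ?_
  rw [← dotC_cVec, dotC_comm, ← mul_assoc]
  rfl

/-- The generators `eᵢ ∈ V` and `eᵢ* ∈ V*` of `𝒲`, indexed like the variables of `S(V ⊕ V*)`. -/
def weylGen : Fin n ⊕ Fin n → WC n :=
  Sum.elim (fun a => wVec ℂ (CV n) (Pi.single a 1)) (fun a => wDual ℂ (CV n) (LinearMap.proj a))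

theorem weylGen_inr_mul_weylGen_inl (k i : Fin n) :
    weylGen (.inr k) * weylGen (.inl i)
      = weylGen (.inl i) * weylGen (.inr k) + (if i = k then 1 else 0 : ℂ) • (1 : WC n) := by
  simp [weylGen, wDual_mul_wVec, Pi.single_apply, eq_comm]

theorem weylGen_inr_mul_weylGen_inl_mul (k i : Fin n) (x : WC n) :
    weylGen (.inr k) * (weylGen (.inl i) * x)
      = weylGen (.inl i) * (weylGen (.inr k) * x) + (if i = k then 1 else 0 : ℂ) • x := by
  rw [← mul_assoc, weylGen_inr_mul_weylGen_inl, add_mul, mul_assoc, smul_mul_assoc, one_mul]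

theorem weylGen_inl_mul_weylGen_inl_mul (i j : Fin n) (x : WC n) :
    weylGen (.inl i) * (weylGen (.inl j) * x) = weylGen (.inl j) * (weylGen (.inl i) * x) := by
  rw [← mul_assoc, ← mul_assoc, weylGen, Sum.elim_inl, Sum.elim_inl, wVec_mul_wVec_comm]

theorem weylGen_inr_mul_weylGen_inr (k l : Fin n) :
    weylGen (.inr k) * weylGen (.inr l) = weylGen (.inr l) * weylGen (.inr k) :=
  wDual_mul_wDual_comm ℂ (CV n) _ _

def IsSymmetrization (Q : MvPolynomial (Fin n ⊕ Fin n) ℂ ≃ₗ[ℂ] WC n) : Prop :=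
  ∀ (m : ℕ) (c : Fin m → Fin n ⊕ Fin n),
    Q (∏ i, MvPolynomial.X (c i)) = (m.factorial : ℂ)⁻¹ • permSum (weylGen ∘ c)

variable (Q : MvPolynomial (Fin n ⊕ Fin n) ℂ ≃ₗ[ℂ] WC n)

/-- `(x)₀`, the degree-0 component of `η x = Q⁻¹ x`. -/
def etaConst : WC n →ₗ[ℂ] ℂ := MvPolynomial.lcoeff ℂ 0 ∘ₗ Q.symm.toLinearMap

theorem etaConst_apply (x : WC n) : etaConst Q x = MvPolynomial.constantCoeff (Q.symm x) := rfl

variable {Q}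

theorem etaConst_one (hQ : IsSymmetrization Q) : etaConst Q 1 = 1 := by
  have h := hQ 0 Fin.elim0
  simp only [Finset.univ_eq_empty, Finset.prod_empty, permSum_zero, Nat.factorial_zero,
    Nat.cast_one, inv_one, one_smul] at h
  simp [etaConst_apply, ← h]

theorem etaConst_permSum (hQ : IsSymmetrization Q) {m : ℕ} (c : Fin (m + 1) → Fin n ⊕ Fin n) :
    etaConst Q (permSum (weylGen ∘ c)) = 0 := by
  have h : permSum (weylGen ∘ c) = ((m + 1).factorial : ℂ) • Q (∏ i, MvPolynomial.X (c i)) := by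
    rw [hQ, smul_smul, mul_inv_cancel₀ (Nat.cast_ne_zero.mpr (Nat.factorial_ne_zero _)), one_smul]
  rw [h, map_smul, etaConst_apply, LinearEquiv.symm_apply_apply, map_prod,
    Finset.prod_eq_zero (Finset.mem_univ 0) (by simp), smul_zero]

theorem etaConst_inl_mul_inr (hQ : IsSymmetrization Q) (i k : Fin n) :
    etaConst Q (weylGen (.inl i) * weylGen (.inr k)) = -(1 / 2) * (if i = k then 1 else 0) := by
  have h := etaConst_permSum hQ ![.inl i, .inr k]
  simp only [Nat.succ_eq_add_one, Nat.reduceAdd, Function.comp_def, permSum_succ,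
    Finset.univ_unique, Fin.default_eq_zero, permSum_zero, mul_one, Finset.sum_singleton,
    Fin.succ_zero_eq_one, Fin.sum_univ_succ, Matrix.cons_val_zero, swap_self, refl_apply,
    Matrix.cons_val_one, Matrix.cons_val_fin_one, Matrix.cons_val_succ, swap_apply_right,
    map_add] at h
  rw [weylGen_inr_mul_weylGen_inl, map_add, map_smul, etaConst_one hQ, smul_eq_mul,
    mul_one] at h
  linear_combination h / 2

theorem etaConst_inl_inl_inr_inr (hQ : IsSymmetrization Q) (i j k l : Fin n) :
    etaConst Q (weylGen (.inl i) * (weylGen (.inl j) * (weylGen (.inr k) * weylGen (.inr l))))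
      = ((if i = k then 1 else 0) * (if j = l then 1 else 0)
          + (if i = l then 1 else 0) * (if j = k then 1 else 0)) / 4 := by
  have h := etaConst_permSum hQ ![.inl i, .inl j, .inr k, .inr l]
  -- expand the 24 words and move the `V*`-letters to the right
  simp only [Nat.succ_eq_add_one, Nat.reduceAdd, Function.comp_def, permSum_succ, swap_apply_def,
    Fin.succ_ne_zero, ↓reduceIte, Finset.univ_unique, Fin.default_eq_zero, permSum_zero, mul_one,
    Finset.sum_singleton, Fin.succ_zero_eq_one, Fin.sum_univ_succ, one_ne_zero,
    Fin.succ_one_eq_two, Fin.reduceEq, Fin.reduceSucc, Matrix.cons_val_zero, Matrix.cons_val_one,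
    Matrix.cons_val, Matrix.cons_val_succ, Matrix.cons_val_fin_one, map_add] at h
  simp only [mul_add, weylGen_inr_mul_weylGen_inl_mul, weylGen_inr_mul_weylGen_inl,
    mul_smul_comm, smul_add, mul_one, weylGen_inl_mul_weylGen_inl_mul j i,
    weylGen_inr_mul_weylGen_inr l k] at h
  simp only [map_add, map_smul, smul_eq_mul, etaConst_inl_mul_inr hQ, etaConst_one hQ,
    mul_one] at h
  linear_combination h / 24

theorem wVec_eq_sum (f : CV n) : wVec ℂ (CV n) f = ∑ i, f i • weylGen (.inl i) := by
  conv_lhs => rw [pi_eq_sum_univ' f, ← wVecₗ_apply, map_sum]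
  simp [weylGen]

theorem wDual_cForm (g : CV n) : wDual ℂ (CV n) (cForm n g) = ∑ k, g k • weylGen (.inr k) := by
  rw [cForm, ← wDualₗ_apply, map_sum]
  simp [weylGen]

theorem etaConst_wVec_mul_wDual_cForm (hQ : IsSymmetrization Q) (f g : CV n) :
    etaConst Q (wVec ℂ (CV n) f * wDual ℂ (CV n) (cForm n g)) = -(1 / 2) * dotC n f g := by
  simp only [wVec_eq_sum, wDual_cForm, Finset.mul_sum, mul_smul_comm, Finset.sum_mul,
    smul_mul_assoc, map_sum, map_smul, etaConst_inl_mul_inr hQ, mul_ite, mul_one, mul_zero,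
    smul_eq_mul, Finset.sum_ite_eq', Finset.mem_univ, ↓reduceIte, dotC]
  exact Finset.sum_congr rfl fun _ _ => by ring

theorem etaConst_wVec_wVec_wDual_wDual (hQ : IsSymmetrization Q) (f f' g g' : CV n) :
    etaConst Q (wVec ℂ (CV n) f * (wVec ℂ (CV n) f' *
        (wDual ℂ (CV n) (cForm n g) * wDual ℂ (CV n) (cForm n g'))))
      = (dotC n f g * dotC n f' g' + dotC n f g' * dotC n f' g) / 4 := by
  simp only [wVec_eq_sum, wDual_cForm, Finset.sum_mul, Finset.mul_sum, smul_mul_assoc,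
    mul_smul_comm, map_sum, map_smul, smul_eq_mul, etaConst_inl_inl_inr_inr hQ]
  simp only [add_div, mul_add, Finset.sum_add_distrib, mul_div_assoc', mul_ite, mul_one,
    mul_zero, ← Finset.sum_div, Finset.sum_ite_irrel, Finset.sum_const_zero,
    Finset.sum_ite_eq', Finset.mem_univ, if_true, dotC, Finset.sum_mul_sum]
  congr 2
  · rw [Finset.sum_comm]
    exact Finset.sum_congr rfl fun _ _ => Finset.sum_congr rfl fun _ _ => by ring
  · exact Finset.sum_congr rfl fun _ _ => Finset.sum_congr rfl fun _ _ => by ring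

theorem etaConst_sq_wVec_mul_wDual_sub (hQ : IsSymmetrization Q) (a b : CV n) :
    etaConst Q ((wVec ℂ (CV n) a * wDual ℂ (CV n) (cForm n b)
        - wVec ℂ (CV n) b * wDual ℂ (CV n) (cForm n a)) ^ 2)
      = (dotC n a a * dotC n b b - dotC n a b ^ 2) / 2 := by
  rw [sq, sub_mul, mul_sub, mul_sub]
  simp only [wVec_mul_wDual_mul_wVec_mul_wDual, map_sub, map_add, map_smul, smul_eq_mul,
    etaConst_wVec_mul_wDual_cForm hQ, etaConst_wVec_wVec_wDual_wDual hQ, cForm_apply,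
    dotC_comm b a]
  ring

theorem nuP_sub (F G : Module.End ℂ (CV n)) : nuP n (F - G) = nuP n F - nuP n G := by
  simp only [nuP, LinearMap.sub_apply, ← wVecₗ_apply, map_sub, sub_mul, Finset.sum_sub_distrib]

theorem nuP_smul (c : ℂ) (F : Module.End ℂ (CV n)) : nuP n (c • F) = c • nuP n F := by
  simp only [nuP, LinearMap.smul_apply, ← wVecₗ_apply, map_smul, smul_mul_assoc, Finset.smul_sum]

theorem nuP_smulRight_cForm (g x : CV n) :
    nuP n ((cForm n g).smulRight x) = wVec ℂ (CV n) x * wDual ℂ (CV n) (cForm n g) := by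
  rw [nuP, wDual_cForm, Finset.mul_sum]
  refine Finset.sum_congr rfl fun i _ => ?_
  rw [LinearMap.smulRight_apply, ← wVecₗ_apply, map_smul, mul_smul_comm, smul_mul_assoc]
  simp [cForm, weylGen, Pi.single_apply]

theorem commC_eq_smul (α β : RV n) (hα : dotR n α α ≠ 0) (hβ : dotR n β β ≠ 0) :
    commC n α β = (Bvee n α β : ℂ) •
      ((cForm n (cVec n β)).smulRight (cVec n α) - (cForm n (cVec n α)).smulRight (cVec n β)) := by
  have hα' : (dotR n α α : ℂ) ≠ 0 := by exact_mod_cast hα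
  have hβ' : (dotR n β β : ℂ) ≠ 0 := by exact_mod_cast hβ
  have eα : (reflE n α).toLinearMap = reflC n α := by rw [reflE, dif_neg hα]
  have eβ : (reflE n β).toLinearMap = reflC n β := by rw [reflE, dif_neg hβ]
  rw [commC, eα, eβ, Bvee]
  ext v
  simp only [reflC, LinearMap.sub_apply, LinearMap.comp_apply, LinearMap.smul_apply,
    LinearMap.smulRight_apply, LinearMap.id_apply, map_sub, map_smul, smul_eq_mul,
    cForm_apply, dotC_cVec, Pi.sub_apply, Pi.smul_apply, dotR_comm β α]
  push_cast
  field_simp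
  ring

theorem etaConst_sq_nuP_commC (hQ : IsSymmetrization Q) (α β : RV n)
    (hα : dotR n α α ≠ 0) (hβ : dotR n β β ≠ 0) :
    etaConst Q (nuP n (commC n α β) ^ 2)
      = (Bvee n α β : ℂ) ^ 2 * ((dotR n α α : ℂ) * dotR n β β - (dotR n α β : ℂ) ^ 2) / 2 := by
  rw [commC_eq_smul α β hα hβ, nuP_smul, nuP_sub, nuP_smulRight_cForm, nuP_smulRight_cForm,
    smul_pow, map_smul, etaConst_sq_wVec_mul_wDual_sub hQ, dotC_cVec, dotC_cVec, dotC_cVec,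
    smul_eq_mul]
  ring

theorem etaConst_nuOmegaPrime_summand (hQ : IsSymmetrization Q) (α β : RV n) (c : ℂ) :
    etaConst Q (if dotR n α β ≠ 0 then (c * (Bvee n α β : ℂ)⁻¹) • nuP n (commC n α β) ^ 2 else 0)
      = c * (2 * dotR n α β - 2 * (dotR n α β : ℂ) ^ 3 / (dotR n α α * dotR n β β)) := by
  by_cases hαβ : dotR n α β = 0
  · simp [hαβ]
  have hα := dotR_self_ne_zero_of_dotR_ne_zero hαβ
  have hβ := dotR_self_ne_zero_of_dotR_ne_zero (by rwa [dotR_comm] : dotR n β α ≠ 0)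
  have hα' : (dotR n α α : ℂ) ≠ 0 := by exact_mod_cast hα
  have hβ' : (dotR n β β : ℂ) ≠ 0 := by exact_mod_cast hβ
  rw [if_pos hαβ, map_smul, etaConst_sq_nuP_commC hQ α β hα hβ, Bvee, smul_eq_mul]
  push_cast
  field_simp
  ring

end

/-- `S(V ⊕ V*)` is modelled by polynomials in the standard basis vectors of `V` and `V*`, so the
degree-0 component is the constant coefficient. -/
theorem statement18
    (Φp : Finset (RV n))
    (kf : RV n → ℂ)
    -- the symmetrization map `Q : S(V⊕V*) → 𝒲(V⊕V*,ω)`, with inverse `η`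
    (Q : MvPolynomial (Fin n ⊕ Fin n) ℂ ≃ₗ[ℂ] WC n)
    (hQ : ∀ (m : ℕ) (c : Fin m → Fin n ⊕ Fin n),
      Q (∏ i, MvPolynomial.X (c i)) =
        (m.factorial : ℂ)⁻¹ • ∑ σ : Equiv.Perm (Fin m),
          (List.ofFn fun i => Sum.elim (fun a => wVec ℂ (CV n) (Pi.single a 1))
            (fun a => wDual ℂ (CV n) (LinearMap.proj a)) (c (σ i))).prod)
    -- `ρ_k = (1/2) Σ_{α>0} k_α α`
    (ρk : CV n) (hρk : ρk = (1 / 2 : ℂ) • ∑ α ∈ Φp, kf α • cVec n α) :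
    MvPolynomial.constantCoeff (Q.symm (nuOmegaPrime n Φp kf))
      = (1 / 2 : ℂ) * dotC n ρk ρk
        - (1 / 8 : ℂ) * ∑ α ∈ Φp, ∑ β ∈ Φp,
            kf α * kf β * ((dotR n α β : ℝ) : ℂ) ^ 3 /
              (((dotR n α α : ℝ) : ℂ) * ((dotR n β β : ℝ) : ℂ)) := by
  have hΩ : etaConst Q (nuOmegaPrime n Φp kf) = (1 / 16) * ∑ α ∈ Φp, ∑ β ∈ Φp, kf α * kf β *
      (2 * dotR n α β - 2 * (dotR n α β : ℂ) ^ 3 / (dotR n α α * dotR n β β)) := by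
    simp only [nuOmegaPrime, map_smul, map_sum, etaConst_nuOmegaPrime_summand hQ, smul_eq_mul]
  have hρ : dotC n ρk ρk = ∑ α ∈ Φp, ∑ β ∈ Φp, (1 / 2 * kf α) * (1 / 2 * kf β) * dotR n α β := by
    rw [hρk, Finset.smul_sum]
    simp only [smul_smul, dotC_sum_smul_cVec]
  rw [← etaConst_apply, hΩ, hρ]
  simp only [Finset.mul_sum, ← Finset.sum_sub_distrib]
  refine Finset.sum_congr rfl fun α _ => Finset.sum_congr rfl fun β _ => ?_
  ring

end RootSystem

end
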